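/- Let B = Π_{j=1}^{d} b_{ν_j} be a finite Blaschke product of degree d with ν_j ∈ 𝔻, and let 1 ≤ p' ≤ ∞. Then ‖B'‖_{L^{p'}(𝕋,m)} ≤ d^{1/p'} · ( Σ_{k=1}^{d} (1+|ν_k|)/(1−|ν_k|) )^{1−1/p'}. -/

import Mathlib

open MeasureTheory Complex Polynomial ComplexConjugate
open scoped ENNReal Real

noncomputable section

/-- Normalized Lebesgue measure on `(0, 2π]`, parametrizing the unit circle `𝕋`. -/
def mT : MeasureTheory.Measure ℝ :=
  (ENNReal.ofReal (2 * Real.pi))⁻¹ • (MeasureTheory.volume.restrict (Set.Ioc 0 (2 * Real.pi)))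

/-- The point `e^{iθ}` on the unit circle. -/
def eθ (θ : ℝ) : ℂ := Complex.exp (θ * Complex.I)

/-- The `L^p(𝕋, m)` norm of a function on the unit circle. -/
def circLp (f : ℂ → ℂ) (p : ℝ≥0∞) : ℝ≥0∞ :=
  MeasureTheory.eLpNorm (fun θ : ℝ => f (eθ θ)) p mT


/-- The elementary Blaschke factor `b_λ(z) = (λ−z)/(1−conj(λ)z)`. -/
def blas (l : ℂ) (z : ℂ) : ℂ := (l - z) / (1 - conj l * z)


def Pk (l ξ : ℂ) : ℝ := (1 - Complex.normSq l) / Complex.normSq (1 - conj l * ξ)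


lemma den_ne {l z : ℂ} (hl : ‖l‖ < 1) (hz : ‖z‖ ≤ 1) :
    1 - conj l * z ≠ 0 := by
  intro h
  have h1 : conj l * z = 1 := by linear_combination -h
  have : ‖conj l * z‖ < 1 := by
    rw [norm_mul, Complex.norm_conj]
    calc ‖l‖ * ‖z‖ ≤ ‖l‖ * 1 :=
          mul_le_mul_of_nonneg_left hz (norm_nonneg l)
      _ < 1 := by simpa using hl
  rw [h1] at this; simp at this

lemma hasDerivAt_blas {l z : ℂ} (h : 1 - conj l * z ≠ 0) :
    HasDerivAt (blas l) ((conj l * l - 1) / (1 - conj l * z) ^ 2) z := by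
  have hc : HasDerivAt (fun y : ℂ => l - y) (-1) z := by
    simpa using (hasDerivAt_id z).const_sub l
  have hd : HasDerivAt (fun y : ℂ => 1 - conj l * y) (-(conj l)) z := by
    simpa using ((hasDerivAt_id z).const_mul (conj l)).const_sub 1
  have := hc.fun_div hd h
  refine this.congr_deriv ?_
  rw [div_left_inj' (pow_ne_zero 2 h)]
  ring

lemma abs_blas {l ξ : ℂ} (hl : ‖l‖ < 1) (hξ : ‖ξ‖ = 1) :
    ‖blas l ξ‖ = 1 := by
  have hξc : ξ * conj ξ = 1 := by
    rw [Complex.mul_conj]; norm_cast; rw [← Complex.sq_norm, hξ]; norm_num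
  have key : 1 - conj l * ξ = -(ξ * conj (l - ξ)) := by
    rw [map_sub]; linear_combination -hξc
  have hden : 1 - conj l * ξ ≠ 0 := den_ne hl (le_of_eq hξ)
  have hne : l - ξ ≠ 0 := by
    intro h
    rw [sub_eq_zero] at h
    rw [h, hξ] at hl
    exact lt_irrefl 1 hl
  rw [blas, norm_div, key]
  rw [norm_neg, norm_mul, hξ, Complex.norm_conj, one_mul]
  exact div_self (by simpa [sub_eq_zero] using hne)

lemma key_ident {l ξ : ℂ} (hl : ‖l‖ < 1) (hξ : ‖ξ‖ = 1) :
    (conj l * l - 1) / (1 - conj l * ξ) ^ 2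
      = blas l ξ * conj ξ * (Pk l ξ : ℂ) := by
  have hξc : ξ * conj ξ = 1 := by
    rw [Complex.mul_conj]; norm_cast; rw [← Complex.sq_norm, hξ]; norm_num
  have hden : 1 - conj l * ξ ≠ 0 := den_ne hl (le_of_eq hξ)
  have hdenc : (1 : ℂ) - l * conj ξ ≠ 0 := by
    have := den_ne (l := conj l) (z := conj ξ) (by simpa using hl)
      (le_of_eq (by rw [Complex.norm_conj, hξ]))
    simpa using this
  have e1 : ((Complex.normSq l : ℝ) : ℂ) = conj l * l :=
    Complex.normSq_eq_conj_mul_self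
  have e2 : ((Complex.normSq (1 - conj l * ξ) : ℝ) : ℂ)
      = (1 - conj l * ξ) * (1 - l * conj ξ) := by
    rw [← Complex.mul_conj]
    simp [map_sub, map_mul]
  rw [Pk, blas]
  push_cast
  rw [e1, e2]
  field_simp
  linear_combination (1 - conj l*l) * hξc

lemma Pk_nonneg {l : ℂ} (ξ : ℂ) (hl : ‖l‖ < 1) : 0 ≤ Pk l ξ := by
  apply div_nonneg _ (Complex.normSq_nonneg _)
  rw [← Complex.sq_norm]
  nlinarith [norm_nonneg l]

lemma Pk_le {l ξ : ℂ} (hl : ‖l‖ < 1) (hξ : ‖ξ‖ = 1) :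
    Pk l ξ ≤ (1 + ‖l‖) / (1 - ‖l‖) := by
  have h1 : 1 - ‖l‖ ≤ ‖1 - conj l * ξ‖ := by
    have := norm_sub_norm_le (1 : ℂ) (conj l * ξ)
    simpa [norm_mul, Complex.norm_conj, hξ] using this
  have h2 : (1 - ‖l‖) ^ 2 ≤ Complex.normSq (1 - conj l * ξ) := by
    rw [← Complex.sq_norm]
    exact pow_le_pow_left₀ (by linarith) h1 2
  have h3 : Pk l ξ ≤ (1 - Complex.normSq l) / (1 - ‖l‖) ^ 2 := by
    apply div_le_div_of_nonneg_left _ (pow_pos (by linarith) 2) h2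
    rw [← Complex.sq_norm]; nlinarith [norm_nonneg l]
  refine h3.trans (le_of_eq ?_)
  rw [← Complex.sq_norm]
  have : (1 : ℝ) - ‖l‖ ≠ 0 := by linarith
  field_simp
  ring

lemma abs_eθ (θ : ℝ) : ‖eθ θ‖ = 1 := Complex.norm_exp_ofReal_mul_I θ

/-- real part of (1+w)/(1-w) -/
lemma re_frac (w : ℂ) :
    ((1 + w) / (1 - w)).re = (1 - Complex.normSq w) / Complex.normSq (1 - w) := by
  rw [Complex.div_re, ← add_div]
  congr 1
  simp [Complex.normSq_apply]
  ring

lemma Pk_eq_re {l : ℂ} (θ : ℝ) :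
    Pk l (eθ θ) = ((1 + conj l * eθ θ) / (1 - conj l * eθ θ)).re := by
  rw [re_frac, Pk]
  congr 2
  rw [Complex.normSq_mul, Complex.normSq_conj]
  have : Complex.normSq (eθ θ) = 1 := by
    rw [← Complex.sq_norm, abs_eθ]; norm_num
  rw [this, mul_one]

lemma contF {l : ℂ} (hl : ‖l‖ < 1) :
    Continuous (fun θ : ℝ => (1 + conj l * eθ θ) / (1 - conj l * eθ θ)) := by
  have he : Continuous eθ := by
    unfold eθ; fun_prop
  apply Continuous.div
  · fun_prop
  · fun_prop
  · intro θ
    exact den_ne hl (le_of_eq (abs_eθ θ))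

lemma integralF {l : ℂ} (hl : ‖l‖ < 1) :
    ∫ θ in (0:ℝ)..(2 * π), (1 + conj l * eθ θ) / (1 - conj l * eθ θ) = 2 * π := by
  set F : ℂ → ℂ := fun z => (1 + conj l * z) / (1 - conj l * z) with hF
  have hd : DiffContOnCl ℂ F (Metric.ball (0:ℂ) 1) := by
    apply DifferentiableOn.diffContOnCl
    rw [closure_ball (0:ℂ) one_ne_zero]
    intro z hz
    apply DifferentiableAt.differentiableWithinAt
    apply DifferentiableAt.div
    · fun_prop
    · fun_prop
    · exact den_ne hl (by simpa using hz)
  have hci := hd.circleIntegral_sub_inv_smul (Metric.mem_ball_self one_pos)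
  rw [circleIntegral] at hci
  have hint : ∀ θ : ℝ, deriv (circleMap 0 1) θ •
      ((circleMap 0 1 θ - 0)⁻¹ • F (circleMap 0 1 θ)) = I * F (eθ θ) := by
    intro θ
    have h0 : circleMap 0 1 θ = eθ θ := by simp [circleMap, eθ]
    have hne : circleMap 0 1 θ ≠ 0 := circleMap_ne_center one_ne_zero
    rw [deriv_circleMap, smul_eq_mul, smul_eq_mul, sub_zero, h0]
    rw [h0] at hne
    field_simp
  rw [intervalIntegral.integral_congr (fun θ _ => hint θ)] at hci
  rw [intervalIntegral.integral_const_mul] at hci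
  have hF0 : F 0 = 1 := by simp [hF]
  rw [hF0] at hci
  have h2 : I * (∫ θ in (0:ℝ)..(2 * π), F (eθ θ)) = I * (2 * (π:ℂ)) := by
    rw [hci, smul_eq_mul, mul_one]; ring
  exact mul_left_cancel₀ I_ne_zero h2

lemma integralPk {l : ℂ} (hl : ‖l‖ < 1) :
    ∫ θ in (0:ℝ)..(2 * π), Pk l (eθ θ) = 2 * π := by
  have hii : IntervalIntegrable (fun θ : ℝ => (1 + conj l * eθ θ) / (1 - conj l * eθ θ))
      volume 0 (2 * π) := (contF hl).intervalIntegrable _ _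
  have := Complex.reCLM.intervalIntegral_comp_comm hii
  simp only [Complex.reCLM_apply] at this
  calc ∫ θ in (0:ℝ)..(2 * π), Pk l (eθ θ)
      = ∫ θ in (0:ℝ)..(2 * π), ((1 + conj l * eθ θ) / (1 - conj l * eθ θ)).re := by
        apply intervalIntegral.integral_congr; intro θ _; exact Pk_eq_re θ
    _ = (∫ θ in (0:ℝ)..(2 * π), (1 + conj l * eθ θ) / (1 - conj l * eθ θ)).re := this
    _ = 2 * π := by rw [integralF hl]; norm_num

lemma abs_derivB {d : ℕ} {ν : Fin d → ℂ} (hν : ∀ j, ‖ν j‖ < 1)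
    {B : ℂ → ℂ} (hB : B = fun z => ∏ j, blas (ν j) z)
    {ξ : ℂ} (hξ : ‖ξ‖ = 1) :
    ‖deriv B ξ‖ = ∑ k, Pk (ν k) ξ := by
  have hder : HasDerivAt B
      (∑ k, (∏ j ∈ Finset.univ.erase k, blas (ν j) ξ) •
        ((conj (ν k) * ν k - 1) / (1 - conj (ν k) * ξ) ^ 2)) ξ := by
    rw [hB]
    exact HasDerivAt.fun_finset_prod fun k _ => hasDerivAt_blas (den_ne (hν k) hξ.le)
  have hd : deriv B ξ = (∏ j, blas (ν j) ξ) * conj ξ * ((∑ k, Pk (ν k) ξ : ℝ) : ℂ) := by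
    rw [hder.deriv]
    push_cast
    rw [Finset.mul_sum]
    apply Finset.sum_congr rfl
    intro k _
    rw [smul_eq_mul, key_ident (hν k) hξ]
    rw [← Finset.prod_erase_mul Finset.univ _ (Finset.mem_univ k)]
    ring
  rw [hd, norm_mul, norm_mul]
  have h1 : ‖∏ j, blas (ν j) ξ‖ = 1 := by
    rw [norm_prod]
    exact Finset.prod_eq_one fun j _ => abs_blas (hν j) hξ
  have h2 : ‖((∑ k, Pk (ν k) ξ : ℝ) : ℂ)‖ = ∑ k, Pk (ν k) ξ := by
    rw [Complex.norm_real, Real.norm_eq_abs]; exact _root_.abs_of_nonneg (Finset.sum_nonneg fun k _ => Pk_nonneg ξ (hν k))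
  rw [h1, h2, Complex.norm_conj, hξ]
  ring

lemma contPk {l : ℂ} (hl : ‖l‖ < 1) :
    Continuous (fun θ : ℝ => Pk l (eθ θ)) := by
  have he : Continuous eθ := by unfold eθ; fun_prop
  unfold Pk
  apply Continuous.div continuous_const
  · exact Complex.continuous_normSq.comp (by fun_prop)
  · intro θ
    exact (Complex.normSq_pos.mpr (den_ne hl (abs_eθ θ).le)).ne'

/-- inequality \eqref{LpderivBlaschke-1}.
For a finite Blaschke product `B = Π_{j=1}^d b_{ν_j}` of degree `d` with `ν_j ∈ 𝔻` and
`1 ≤ p' ≤ ∞`, `‖B'‖_{L^{p'}} ≤ d^{1/p'} (Σ_k (1+|ν_k|)/(1−|ν_k|))^{1−1/p'}`. -/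
theorem stmt_15 (d : ℕ) (ν : Fin d → ℂ) (hν : ∀ j, ‖ν j‖ < 1)
    (B : ℂ → ℂ) (hB : B = fun z => ∏ j, blas (ν j) z)
    (p' : ℝ≥0∞) (hp' : 1 ≤ p') :
    circLp (deriv B) p' ≤
      ENNReal.ofReal
        ((d : ℝ) ^ p'.toReal⁻¹ *
          (∑ k, (1 + ‖ν k‖) / (1 - ‖ν k‖)) ^
            (1 - p'.toReal⁻¹)) := by
  set S : ℝ := ∑ k, (1 + ‖ν k‖) / (1 - ‖ν k‖) with hS
  set g : ℝ → ℝ := fun θ => ∑ k, Pk (ν k) (eθ θ) with hgdef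
  have hgnn : ∀ θ, 0 ≤ g θ := fun θ =>
    Finset.sum_nonneg fun k _ => Pk_nonneg _ (hν k)
  have hgS : ∀ θ, g θ ≤ S := fun θ =>
    Finset.sum_le_sum fun k _ => Pk_le (hν k) (abs_eθ θ)
  have hS0 : 0 ≤ S := le_trans (hgnn 0) (hgS 0)
  have hg_eq : ∀ θ : ℝ, (‖deriv B (eθ θ)‖₊ : ℝ≥0∞) = ENNReal.ofReal (g θ) := by
    intro θ
    rw [← enorm_eq_nnnorm, ← ofReal_norm, abs_derivB hν hB (abs_eθ θ)]
  have hgcont : Continuous g := continuous_finset_sum _ fun k _ => contPk (hν k)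
  -- L¹ computation
  have hL1 : ∫⁻ θ, ENNReal.ofReal (g θ) ∂mT = (d : ℝ≥0∞) := by
    rw [mT, lintegral_smul_measure]
    have hInt : IntegrableOn g (Set.Ioc 0 (2 * π)) volume := hgcont.integrableOn_Ioc
    have h1 : ∫⁻ θ in Set.Ioc 0 (2 * π), ENNReal.ofReal (g θ) ∂volume
        = ENNReal.ofReal (∫ θ in Set.Ioc 0 (2 * π), g θ ∂volume) :=
      (ofReal_integral_eq_lintegral_ofReal hInt (ae_of_all _ hgnn)).symm
    have h2 : ∫ θ in Set.Ioc 0 (2 * π), g θ ∂volume = d * (2 * π) := by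
      rw [← intervalIntegral.integral_of_le (by positivity)]
      rw [hgdef]
      rw [intervalIntegral.integral_finset_sum
        (fun k _ => ((contPk (hν k)).intervalIntegrable _ _))]
      rw [Finset.sum_congr rfl fun k _ => integralPk (hν k)]
      simp [mul_comm]
    rw [h1, h2]
    have h3 : ENNReal.ofReal ((d:ℝ) * (2 * π)) = ENNReal.ofReal (2 * π) * (d:ℝ≥0∞) := by
      rw [mul_comm, ENNReal.ofReal_mul (by positivity : (0:ℝ) ≤ 2 * π),
        ENNReal.ofReal_natCast]
    rw [h3, smul_eq_mul, ← mul_assoc, ENNReal.inv_mul_cancel (by positivity) ENNReal.ofReal_ne_top,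
      one_mul]
  by_cases htop : p' = ⊤
  · subst htop
    rw [circLp, eLpNorm_exponent_top, eLpNormEssSup]
    have hb : essSup (fun θ : ℝ => (‖deriv B (eθ θ)‖₊ : ℝ≥0∞)) mT ≤ ENNReal.ofReal S := by
      refine essSup_le_of_ae_le _ ?_
      apply ae_of_all
      intro θ
      show (‖deriv B (eθ θ)‖₊ : ℝ≥0∞) ≤ ENNReal.ofReal S
      rw [hg_eq θ]
      exact ENNReal.ofReal_le_ofReal (hgS θ)
    simpa [enorm_eq_nnnorm] using hb
  · have hp'0 : p' ≠ 0 := by positivity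
    set p : ℝ := p'.toReal with hp
    have hp1 : 1 ≤ p := by
      have := ENNReal.toReal_mono htop hp'
      simpa using this
    have hp0 : 0 < p := by linarith
    have hpinv1 : p⁻¹ ≤ 1 := by
      rw [inv_le_one₀ hp0]; exact hp1
    rw [circLp, eLpNorm_eq_lintegral_rpow_enorm_toReal hp'0 htop, ← hp]
    have hbound : ∫⁻ θ, (‖deriv B (eθ θ)‖₊ : ℝ≥0∞) ^ p ∂mT
        ≤ ENNReal.ofReal S ^ (p - 1) * (d : ℝ≥0∞) := by
      rw [← hL1, ← lintegral_const_mul' _ _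
        (ENNReal.rpow_ne_top_of_nonneg (by linarith) ENNReal.ofReal_ne_top)]
      apply lintegral_mono
      intro θ
      show (‖deriv B (eθ θ)‖₊ : ℝ≥0∞) ^ p ≤ ENNReal.ofReal S ^ (p - 1) * ENNReal.ofReal (g θ)
      rw [hg_eq θ]
      calc ENNReal.ofReal (g θ) ^ p
          = ENNReal.ofReal (g θ) ^ (p - 1) * ENNReal.ofReal (g θ) ^ (1:ℝ) := by
            rw [← ENNReal.rpow_add_of_nonneg _ _ (by linarith) zero_le_one]
            norm_num
        _ ≤ ENNReal.ofReal S ^ (p - 1) * ENNReal.ofReal (g θ) := by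
            rw [ENNReal.rpow_one]
            exact mul_le_mul_left
              (ENNReal.rpow_le_rpow (ENNReal.ofReal_le_ofReal (hgS θ)) (by linarith)) _
    calc (∫⁻ θ, (‖deriv B (eθ θ)‖₊ : ℝ≥0∞) ^ p ∂mT) ^ (1 / p)
        ≤ (ENNReal.ofReal S ^ (p - 1) * (d : ℝ≥0∞)) ^ (1 / p) :=
          ENNReal.rpow_le_rpow hbound (by positivity)
      _ = ENNReal.ofReal S ^ (1 - p⁻¹) * (d : ℝ≥0∞) ^ p⁻¹ := by
          rw [ENNReal.mul_rpow_of_nonneg _ _ (by positivity : (0:ℝ) ≤ 1 / p),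
            ← ENNReal.rpow_mul, one_div]
          congr 2
          field_simp
      _ = ENNReal.ofReal ((d : ℝ) ^ p⁻¹ * S ^ (1 - p⁻¹)) := by
          rw [ENNReal.ofReal_mul (by positivity : (0:ℝ) ≤ (d:ℝ) ^ p⁻¹),
            ENNReal.ofReal_rpow_of_nonneg hS0 (by linarith : (0:ℝ) ≤ 1 - p⁻¹),
            ← ENNReal.ofReal_rpow_of_nonneg (Nat.cast_nonneg d)
              (by positivity : (0:ℝ) ≤ p⁻¹),
            ENNReal.ofReal_natCast]
          ring
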